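/- arXiv:1611.10285 — 2 statements merged into one kernel-verified Lean document; each statement's English description precedes it below -/
import Mathlib

section
/- Let $k$ be a field, $L$ a finite group, and $\alpha: L \times L \to k^\times$ a normalized 2-cocycle. View $k^\alpha L$ as a module over its enveloping algebra $(k^\alpha L)^e = k^\alpha L \otimes (k^\alpha L)^{op}$ via $(a \otimes b) \cdot c = a c b$. Then $k^\alpha L \cong (k^\alpha L)^e \otimes_{\delta(kL)} k$ as $(k^\alpha L)^e$-modules, where $kL$ embeds in $(k^\alpha L)^e$ via $\delta(l) = \overline{l} \otimes (\overline{l})^{-1}$ and $k$ is the trivial $kL$-module; i.e., $k^\alpha L$ is induced from the trivial module of $kL$. -/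
/-!
Multiplication `μ : x ⊗ y ↦ x y` maps `Aᵉ = A ⊗ Aᵐᵒᵖ` onto `A`, is `Aᵉ`-equivariant and kills
every `δ(u) - 1 = u ⊗ u⁻¹ - 1`, so the left ideal `I` generated by these lies in its kernel.
Conversely `x ⊗ u - x u ⊗ 1 = -(x ⊗ u) (u ⊗ u⁻¹ - 1) ∈ I`; when the units `u` span `A` this gives
`z ≡ μ(z) ⊗ 1 (mod I)` for every `z`, so `ker μ ⊆ I`.
-/

open TensorProduct

def IsNormalized2Cocycle {k L : Type*} [Field k] [Group L] (σ : L → L → kˣ) : Prop :=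
  (∀ l m n : L, σ l m * σ (l * m) n = σ m n * σ l (m * n)) ∧
    (∀ l : L, σ 1 l = 1) ∧ (∀ l : L, σ l 1 = 1)

namespace EnvelopingAlgebra

variable {k A : Type*} [CommRing k] [Ring A] [Algebra k A]

variable (k A) in
noncomputable def mulMap : A ⊗[k] Aᵐᵒᵖ →ₗ[k] A :=
  LinearMap.mul' k A ∘ₗ TensorProduct.map LinearMap.id (MulOpposite.opLinearEquiv k).symm.toLinearMap

@[simp]
theorem mulMap_tmul (x : A) (y : Aᵐᵒᵖ) : mulMap k A (x ⊗ₜ y) = x * y.unop := by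
  simp [mulMap]

theorem mulMap_tmul_mul (x y : A) (z : A ⊗[k] Aᵐᵒᵖ) :
    mulMap k A ((x ⊗ₜ MulOpposite.op y) * z) = x * mulMap k A z * y := by
  induction z using TensorProduct.induction_on with
  | zero => simp
  | tmul a c => simp [mul_assoc]
  | add z w hz hw => rw [mul_add, map_add, map_add, hz, hw, mul_add, add_mul]

theorem mulMap_mul_eq_zero (r : A ⊗[k] Aᵐᵒᵖ) {z : A ⊗[k] Aᵐᵒᵖ} (hz : mulMap k A z = 0) :
    mulMap k A (r * z) = 0 := by
  induction r using TensorProduct.induction_on with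
  | zero => simp
  | tmul x c => rw [← c.op_unop, mulMap_tmul_mul, hz, mul_zero, zero_mul]
  | add r s hr hs => rw [add_mul, map_add, hr, hs, add_zero]

theorem mulMap_surjective : Function.Surjective (mulMap k A) :=
  fun a => ⟨a ⊗ₜ MulOpposite.op 1, by simp⟩

variable {ι : Type*}

variable (k) in
def deltaIdeal (u : ι → Aˣ) : Submodule (A ⊗[k] Aᵐᵒᵖ) (A ⊗[k] Aᵐᵒᵖ) :=
  Submodule.span (A ⊗[k] Aᵐᵒᵖ)
    {z | ∃ i, z = (u i : A) ⊗ₜ[k] MulOpposite.op (((u i)⁻¹ : Aˣ) : A) - 1}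

theorem mulMap_eq_zero_of_mem_deltaIdeal (u : ι → Aˣ) {z : A ⊗[k] Aᵐᵒᵖ}
    (hz : z ∈ deltaIdeal k u) : mulMap k A z = 0 := by
  induction hz using Submodule.span_induction with
  | mem w hw =>
    obtain ⟨i, rfl⟩ := hw
    rw [map_sub, Algebra.TensorProduct.one_def]
    simp
  | zero => simp
  | add w v _ _ hw hv => rw [map_add, hw, hv, add_zero]
  | smul r w _ hw => exact mulMap_mul_eq_zero r hw

theorem tmul_sub_mul_tmul_one_mem_deltaIdeal (u : ι → Aˣ)
    (hu : Submodule.span k (Set.range fun i => (u i : A)) = ⊤) (x y : A) :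
    x ⊗ₜ MulOpposite.op y - (x * y) ⊗ₜ MulOpposite.op 1 ∈ deltaIdeal k u := by
  have hy : y ∈ Submodule.span k (Set.range fun i => (u i : A)) := hu ▸ Submodule.mem_top
  induction hy using Submodule.span_induction with
  | mem w hw =>
    obtain ⟨i, rfl⟩ := hw
    have hδ : (u i : A) ⊗ₜ[k] MulOpposite.op (((u i)⁻¹ : Aˣ) : A) - 1 ∈ deltaIdeal k u :=
      Submodule.subset_span ⟨i, rfl⟩
    have hfactor : x ⊗ₜ MulOpposite.op (u i : A) - (x * u i) ⊗ₜ MulOpposite.op 1 =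
        -((x ⊗ₜ MulOpposite.op (u i : A)) *
          ((u i : A) ⊗ₜ[k] MulOpposite.op (((u i)⁻¹ : Aˣ) : A) - 1)) := by
      rw [mul_sub, mul_one, Algebra.TensorProduct.tmul_mul_tmul, ← MulOpposite.op_mul,
        Units.inv_mul, neg_sub]
    rw [hfactor]
    exact (deltaIdeal k u).neg_mem ((deltaIdeal k u).smul_mem _ hδ)
  | zero => simp
  | add y y' _ _ hy hy' =>
    convert (deltaIdeal k u).add_mem hy hy' using 1
    rw [MulOpposite.op_add, tmul_add, mul_add, add_tmul]
    abel
  | smul c y _ hy =>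
    convert (deltaIdeal k u).smul_of_tower_mem c hy using 1
    rw [smul_sub, MulOpposite.op_smul, tmul_smul, mul_smul_comm, smul_tmul' c (x * y)]

theorem sub_mulMap_tmul_one_mem_deltaIdeal (u : ι → Aˣ)
    (hu : Submodule.span k (Set.range fun i => (u i : A)) = ⊤) (z : A ⊗[k] Aᵐᵒᵖ) :
    z - mulMap k A z ⊗ₜ MulOpposite.op 1 ∈ deltaIdeal k u := by
  induction z using TensorProduct.induction_on with
  | zero => simp
  | tmul x c => simpa using tmul_sub_mul_tmul_one_mem_deltaIdeal u hu x c.unop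
  | add z w hz hw =>
    convert (deltaIdeal k u).add_mem hz hw using 1
    rw [map_add, add_tmul]
    abel

theorem ker_mulMap_eq_deltaIdeal (u : ι → Aˣ)
    (hu : Submodule.span k (Set.range fun i => (u i : A)) = ⊤) :
    LinearMap.ker (mulMap k A) = (deltaIdeal k u).restrictScalars k := by
  ext z
  refine ⟨fun hz => ?_, mulMap_eq_zero_of_mem_deltaIdeal u⟩
  simpa [LinearMap.mem_ker.mp hz] using sub_mulMap_tmul_one_mem_deltaIdeal u hu z

end EnvelopingAlgebra

open EnvelopingAlgebra in
theorem stmt_8_general (k L : Type*) [Field k]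
    (A : Type*) [Ring A] [Algebra k A]
    (bar : L → Aˣ) (b : Module.Basis L k A) (hb : ∀ l : L, b l = (bar l : A)) :
    ∃ f : (A ⊗[k] Aᵐᵒᵖ) →ₗ[k] A,
      (∀ x y : A, f (x ⊗ₜ[k] MulOpposite.op y) = x * y) ∧
      (∀ (x y : A) (z : A ⊗[k] Aᵐᵒᵖ),
        f ((x ⊗ₜ[k] MulOpposite.op y) * z) = x * f z * y) ∧
      Function.Surjective f ∧
      (LinearMap.ker f : Set (A ⊗[k] Aᵐᵒᵖ)) =
        (Submodule.span (A ⊗[k] Aᵐᵒᵖ)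
          { z : A ⊗[k] Aᵐᵒᵖ | ∃ l : L,
            z = (bar l : A) ⊗ₜ[k] MulOpposite.op (((bar l)⁻¹ : Aˣ) : A) - 1 } :
          Set (A ⊗[k] Aᵐᵒᵖ)) := by
  have hspan : Submodule.span k (Set.range fun l => (bar l : A)) = ⊤ := by
    rw [← b.span_eq]
    congr 2
    exact funext fun l => (hb l).symm
  refine ⟨mulMap k A, fun x y => mulMap_tmul x _, mulMap_tmul_mul, mulMap_surjective, ?_⟩
  rw [ker_mulMap_eq_deltaIdeal bar hspan]
  rfl

/-- as a module over its enveloping algebra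
`(k^α L)ᵉ = k^α L ⊗ (k^α L)ᵒᵖ` (acting by `(a ⊗ b) · c = a c b`), the twisted
group algebra `k^α L` is induced from the trivial module `k` of `kL`, embedded
via `δ(l) = bar l ⊗ (bar l)⁻¹`.  Equivalently (since
`(k^α L)ᵉ ⊗_{δ(kL)} k ≅ (k^α L)ᵉ / I` where `I` is the `(k^α L)ᵉ`-submodule
generated by the elements `δ(l) - 1`), the `(k^α L)ᵉ`-equivariant map
`(k^α L)ᵉ → k^α L`, `x ⊗ y ↦ x y`, is surjective with kernel exactly `I`.
Here `k^α L` is modelled as a `k`-algebra `A` with basis of units `{bar l}`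
satisfying `bar 1 = 1` and `bar l * bar m = α(l,m) • bar (lm)`. -/
theorem stmt_8 (k L : Type*) [Field k] [Group L] [Finite L]
    (α : L → L → kˣ) (hα : IsNormalized2Cocycle α)
    (A : Type*) [Ring A] [Algebra k A]
    (bar : L → Aˣ) (b : Module.Basis L k A) (hb : ∀ l : L, b l = (bar l : A))
    (hone : bar 1 = 1)
    (hmul : ∀ l m : L, (bar l : A) * (bar m : A) = (α l m : k) • (bar (l * m) : A)) :
    ∃ f : (A ⊗[k] Aᵐᵒᵖ) →ₗ[k] A,
      (∀ x y : A, f (x ⊗ₜ[k] MulOpposite.op y) = x * y) ∧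
      (∀ (x y : A) (z : A ⊗[k] Aᵐᵒᵖ),
        f ((x ⊗ₜ[k] MulOpposite.op y) * z) = x * f z * y) ∧
      Function.Surjective f ∧
      (LinearMap.ker f : Set (A ⊗[k] Aᵐᵒᵖ)) =
        (Submodule.span (A ⊗[k] Aᵐᵒᵖ)
          { z : A ⊗[k] Aᵐᵒᵖ | ∃ l : L,
            z = (bar l : A) ⊗ₜ[k] MulOpposite.op (((bar l)⁻¹ : Aˣ) : A) - 1 } :
          Set (A ⊗[k] Aᵐᵒᵖ)) :=
  stmt_8_general k L A bar b hb
end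

section
/- Let $A$ be a finite dimensional Hopf algebra over a field $k$ and $M$ a finite dimensional $A$-module. If $M \otimes M$ is projective and $M \otimes M^* \cong M^* \otimes M$ as $A$-modules, then $M$ is projective. -/
open TensorProduct

/-!
By rigidity, `M → (M ⊗ M*) ⊗ M ≅ M ⊗ (M* ⊗ M) → M` (coevaluation, then evaluation) is the
identity, so `M` is a retract of `M ⊗ (M* ⊗ M)`, which `M* ⊗ M ≅ M ⊗ M*` identifies with
`(M ⊗ M) ⊗ M*`. This is projective because `P ⊗ W` is projective whenever `P` is: `P` is a retract
of the free module `A ⊗ P`, and `(A ⊗ V) ⊗ W` with the diagonal action is free: the untwisting map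
`b ⊗ (v ⊗ w) ↦ ∑ (b₁ ⊗ v) ⊗ b₂ w` from `A ⊗ (V ⊗ W)` is `A`-linear, with inverse
`(b ⊗ v) ⊗ w ↦ ∑ b₁ ⊗ (v ⊗ S(b₂) w)`.
-/

/-- Given a bialgebra `A` over `k` and `A`-module structures on `M` and `N`
(encoded as `k`-algebra maps `A → End_k M`, `A → End_k N`), the `A`-module
structure on `M ⊗[k] N` obtained by letting `a` act via the comultiplication,
`a • (m ⊗ n) = Σ a₁ m ⊗ a₂ n`. -/
noncomputable def tensorAction {k A M N : Type*} [CommSemiring k]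
    [Semiring A] [Bialgebra k A]
    [AddCommMonoid M] [Module k M] [AddCommMonoid N] [Module k N]
    (ρM : A →ₐ[k] Module.End k M) (ρN : A →ₐ[k] Module.End k N) :
    A →ₐ[k] Module.End k (M ⊗[k] N) :=
  (Module.endTensorEndAlgHom (R := k) (S := k) (A := k) (M := M) (N := N)).comp
    ((Algebra.TensorProduct.map ρM ρN).comp (Bialgebra.comulAlgHom k A))

section TensorAction

variable {k A B C M N P M' N' : Type*} [CommSemiring k]
  [AddCommMonoid M] [Module k M] [AddCommMonoid N] [Module k N] [AddCommMonoid P] [Module k P]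
  [AddCommMonoid M'] [Module k M'] [AddCommMonoid N'] [Module k N']

def Intertwines [Semiring A] [Algebra k A] (ρ : A →ₐ[k] Module.End k M)
    (σ : A →ₐ[k] Module.End k N) (f : M →ₗ[k] N) : Prop :=
  ∀ a x, f (ρ a x) = σ a (f x)

namespace Intertwines

variable [Semiring A] [Algebra k A] {ρ : A →ₐ[k] Module.End k M} {σ : A →ₐ[k] Module.End k N}
  {τ : A →ₐ[k] Module.End k P}

lemma comp {g : N →ₗ[k] P} {f : M →ₗ[k] N} (hg : Intertwines σ τ g) (hf : Intertwines ρ σ f) :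
    Intertwines ρ τ (g ∘ₗ f) := fun a x => by
  simp only [LinearMap.comp_apply, hf a x, hg a (f x)]

lemma symm {e : M ≃ₗ[k] N} (he : Intertwines ρ σ e.toLinearMap) :
    Intertwines σ ρ e.symm.toLinearMap := fun a y => by
  apply e.injective
  simpa using (he a (e.symm y)).symm

end Intertwines

noncomputable def externalTensor [Semiring B] [Algebra k B] [Semiring C] [Algebra k C]
    (ρ : B →ₐ[k] Module.End k M) (σ : C →ₐ[k] Module.End k N) :
    B ⊗[k] C →ₐ[k] Module.End k (M ⊗[k] N) :=
  Module.endTensorEndAlgHom.comp (Algebra.TensorProduct.map ρ σ)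

@[simp]
lemma externalTensor_tmul [Semiring B] [Algebra k B] [Semiring C] [Algebra k C]
    (ρ : B →ₐ[k] Module.End k M) (σ : C →ₐ[k] Module.End k N) (b : B) (c : C) :
    externalTensor ρ σ (b ⊗ₜ c) = map (ρ b) (σ c) :=
  rfl

variable [Semiring A] [Bialgebra k A]

lemma tensorAction_eq (ρ : A →ₐ[k] Module.End k M) (σ : A →ₐ[k] Module.End k N) (a : A) :
    tensorAction ρ σ a = externalTensor ρ σ (Coalgebra.comul a) :=
  rfl

lemma tensorAction_tmul {ι : Type*} (ρ : A →ₐ[k] Module.End k M) (σ : A →ₐ[k] Module.End k N)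
    {a : A} (ℛ : Coalgebra.Repr k a ι) (x : M) (y : N) :
    tensorAction ρ σ a (x ⊗ₜ y) = ∑ i ∈ ℛ.index, ρ (ℛ.left i) x ⊗ₜ σ (ℛ.right i) y := by
  simp [tensorAction_eq, ← ℛ.eq]

variable {ρ : A →ₐ[k] Module.End k M} {σ : A →ₐ[k] Module.End k N} {τ : A →ₐ[k] Module.End k P}

lemma Intertwines.tensorMap {ρ' : A →ₐ[k] Module.End k M'} {σ' : A →ₐ[k] Module.End k N'}
    {f : M →ₗ[k] M'} {g : N →ₗ[k] N'} (hf : Intertwines ρ ρ' f) (hg : Intertwines σ σ' g) :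
    Intertwines (tensorAction ρ σ) (tensorAction ρ' σ') (map f g) := by
  have key (u : A ⊗[k] A) :
      map f g ∘ₗ externalTensor ρ σ u = externalTensor ρ' σ' u ∘ₗ map f g := by
    induction u using TensorProduct.induction_on with
    | zero => simp
    | tmul b c =>
      rw [externalTensor_tmul, externalTensor_tmul, ← map_comp, ← map_comp]
      congr 1 <;> ext <;> simp [hf _ _, hg _ _]
    | add u v hu hv => simp only [map_add, LinearMap.comp_add, LinearMap.add_comp, hu, hv]
  exact fun a x => LinearMap.congr_fun (key (Coalgebra.comul a)) x

lemma intertwines_assoc :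
    Intertwines (tensorAction (tensorAction ρ σ) τ) (tensorAction ρ (tensorAction σ τ))
      (TensorProduct.assoc k M N P).toLinearMap := by
  have key (u : (A ⊗[k] A) ⊗[k] A) :
      (TensorProduct.assoc k M N P).toLinearMap ∘ₗ externalTensor (externalTensor ρ σ) τ u =
        externalTensor ρ (externalTensor σ τ) (TensorProduct.assoc k A A A u) ∘ₗ
          (TensorProduct.assoc k M N P).toLinearMap := by
    induction u using TensorProduct.induction_on with
    | zero => simp
    | tmul bc d =>
      induction bc using TensorProduct.induction_on with
      | zero => simp
      | tmul b c => simp [map_map_comp_assoc_eq]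
      | add u v hu hv =>
        simp only [add_tmul, map_add, LinearMap.comp_add, LinearMap.add_comp, hu, hv]
    | add u v hu hv => simp only [map_add, LinearMap.comp_add, LinearMap.add_comp, hu, hv]
  have hleft (u : A ⊗[k] A) : externalTensor (tensorAction ρ σ) τ u =
      externalTensor (externalTensor ρ σ) τ (Coalgebra.comul.rTensor A u) := by
    induction u using TensorProduct.induction_on with
    | zero => simp
    | tmul b c => rfl
    | add u v hu hv => simp only [map_add, hu, hv]
  have hright (u : A ⊗[k] A) : externalTensor ρ (tensorAction σ τ) u =
      externalTensor ρ (externalTensor σ τ) (Coalgebra.comul.lTensor A u) := by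
    induction u using TensorProduct.induction_on with
    | zero => simp
    | tmul b c => rfl
    | add u v hu hv => simp only [map_add, hu, hv]
  intro a x
  rw [tensorAction_eq, tensorAction_eq, hleft, hright, ← Coalgebra.coassoc_apply]
  exact LinearMap.congr_fun (key _) x

lemma intertwines_mk_of_invariant {c : M} (hc : ∀ b, ρ b c = Coalgebra.counit (R := k) b • c) :
    Intertwines σ (tensorAction ρ σ) (TensorProduct.mk k M N c) := fun a y => by
  let ℛ := Coalgebra.Repr.arbitrary k a
  conv_lhs => rw [← Coalgebra.sum_counit_smul ℛ]
  simp [tensorAction_tmul ρ σ ℛ, hc, map_sum, smul_tmul]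

lemma intertwines_rid_lTensor_of_invariant {φ : N →ₗ[k] k}
    (hφ : ∀ b y, φ (σ b y) = Coalgebra.counit (R := k) b * φ y) :
    Intertwines (tensorAction ρ σ) ρ ((TensorProduct.rid k M).toLinearMap ∘ₗ φ.lTensor M) := by
  intro a z
  induction z using TensorProduct.induction_on with
  | zero => simp
  | tmul x y =>
    let ℛ := Coalgebra.Repr.arbitrary k a
    have hcounit : ∑ i ∈ ℛ.index, Coalgebra.counit (R := k) (ℛ.right i) • ℛ.left i = a := by
      have := congr(TensorProduct.rid k A $(Coalgebra.sum_tmul_counit_eq ℛ))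
      simpa only [map_sum, rid_tmul, one_smul] using this
    conv_rhs => rw [← hcounit]
    simp [tensorAction_tmul ρ σ ℛ, hφ, map_sum, mul_smul, Finset.smul_sum, smul_comm (φ y)]
  | add z w hz hw => simp only [map_add, LinearMap.comp_apply] at *; rw [hz, hw]

end TensorAction

lemma contractLeft_tensorAction {k A M : Type*} [CommSemiring k] [Semiring A] [HopfAlgebra k A]
    [AddCommMonoid M] [Module k M] {ρ : A →ₐ[k] Module.End k M}
    {ρD : A →ₐ[k] Module.End k (Module.Dual k M)}
    (hρD : ∀ a f m, ρD a f m = f (ρ (HopfAlgebra.antipode k a) m)) (a : A)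
    (w : Module.Dual k M ⊗[k] M) :
    contractLeft k M (tensorAction ρD ρ a w) = Coalgebra.counit (R := k) a * contractLeft k M w := by
  induction w using TensorProduct.induction_on with
  | zero => simp
  | tmul f x =>
    let ℛ := Coalgebra.Repr.arbitrary k a
    have hS := HopfAlgebra.sum_antipode_mul_eq_smul ℛ
    apply_fun fun b => f (ρ b x) at hS
    simpa [tensorAction_tmul ρD ρ ℛ, hρD, map_sum] using hS
  | add w w' hw hw' => simp only [map_add, hw, hw', mul_add]

lemma tensorAction_coevaluation {k A M : Type*} [Field k] [Semiring A] [HopfAlgebra k A]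
    [AddCommGroup M] [Module k M] [FiniteDimensional k M] {ρ : A →ₐ[k] Module.End k M}
    {ρD : A →ₐ[k] Module.End k (Module.Dual k M)}
    (hρD : ∀ a f m, ρD a f m = f (ρ (HopfAlgebra.antipode k a) m)) (a : A) :
    tensorAction ρ ρD a (coevaluation k M 1) =
      Coalgebra.counit (R := k) a • coevaluation k M 1 := by
  let χ : M ⊗[k] Module.Dual k M ≃ₗ[k] Module.End k M :=
    (TensorProduct.comm k M (Module.Dual k M)).trans (dualTensorHomEquiv k M M)
  have hχ (x : M) (f : Module.Dual k M) (m : M) : χ (x ⊗ₜ f) m = f m • x := by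
    simp [χ, dualTensorHom_apply]
  have hχ_coev : χ (coevaluation k M 1) = 1 := by
    ext m
    simpa [coevaluation_apply_one, map_sum, hχ] using (Module.Basis.ofVectorSpace k M).sum_repr m
  let ℛ := Coalgebra.Repr.arbitrary k a
  have hconj (t : M ⊗[k] Module.Dual k M) : χ (tensorAction ρ ρD a t) =
      ∑ i ∈ ℛ.index, ρ (ℛ.left i) * χ t * ρ (HopfAlgebra.antipode k (ℛ.right i)) := by
    induction t using TensorProduct.induction_on with
    | zero => simp
    | tmul x f => ext m; simp [tensorAction_tmul ρ ρD ℛ, hχ, hρD, map_sum]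
    | add t t' ht ht' => simp only [map_add, ht, ht', mul_add, add_mul, Finset.sum_add_distrib]
  apply χ.injective
  rw [hconj, hχ_coev, map_smul, hχ_coev]
  simp_rw [mul_one, ← map_mul, ← map_sum, HopfAlgebra.sum_mul_antipode_eq_smul ℛ, map_smul, map_one]

lemma projective_of_retract {k A M N : Type*} [CommSemiring k] [Semiring A] [Algebra k A]
    [AddCommMonoid M] [Module k M] [AddCommMonoid N] [Module k N] [Module A N]
    [Module.Projective A N] (ρ : A →ₐ[k] Module.End k M) (i : M →ₗ[k] N) (p : N →ₗ[k] M)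
    (hi : ∀ a x, i (ρ a x) = a • i x) (hp : ∀ a y, p (a • y) = ρ a (p y))
    (hpi : ∀ x, p (i x) = x) :
    letI := Module.compHom M ρ.toRingHom
    Module.Projective A M :=
  letI := Module.compHom M ρ.toRingHom
  .of_split (M := N) ⟨i.toAddHom, hi⟩ ⟨p.toAddHom, hp⟩ (LinearMap.ext hpi)

section Untwisting

variable {k A V W : Type*} [CommSemiring k] [Semiring A] [HopfAlgebra k A]
  [AddCommMonoid V] [Module k V] [AddCommMonoid W] [Module k W] (τ : A →ₐ[k] Module.End k W)

noncomputable def fusionMap (φ : A →ₗ[k] A) : A ⊗[k] W →ₗ[k] A ⊗[k] W :=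
  (lift τ.toLinearMap).lTensor A ∘ₗ (TensorProduct.assoc k A A W).toLinearMap ∘ₗ
    (φ.lTensor A ∘ₗ Coalgebra.comul).rTensor W

lemma fusionMap_tmul (φ : A →ₗ[k] A) {ι : Type*} {b : A} (ℛ : Coalgebra.Repr k b ι) (w : W) :
    fusionMap τ φ (b ⊗ₜ w) = ∑ i ∈ ℛ.index, ℛ.left i ⊗ₜ τ (φ (ℛ.right i)) w := by
  simp [fusionMap, ← ℛ.eq, map_sum, sum_tmul]

lemma fusionMap_comp (φ ψ : A →ₗ[k] A) :
    fusionMap τ φ ∘ₗ fusionMap τ ψ =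
      fusionMap τ (LinearMap.mul' k A ∘ₗ map φ ψ ∘ₗ Coalgebra.comul) := by
  refine TensorProduct.ext' fun b w => ?_
  let ℛ := Coalgebra.Repr.arbitrary k b
  let Φ : A ⊗[k] (A ⊗[k] A) →ₗ[k] A ⊗[k] W :=
    (LinearMap.applyₗ w ∘ₗ τ.toLinearMap ∘ₗ LinearMap.mul' k A ∘ₗ map φ ψ).lTensor A
  have h := congr(Φ $(Coalgebra.sum_tmul_tmul_eq ℛ (fun i => .arbitrary k (ℛ.left i))
    (fun i => .arbitrary k (ℛ.right i))))
  simp only [Φ, map_sum, LinearMap.lTensor_tmul, map_tmul, LinearMap.comp_apply,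
    LinearMap.mul'_apply, AlgHom.toLinearMap_apply, map_mul, LinearMap.applyₗ_apply_apply,
    Module.End.mul_apply] at h
  simp only [LinearMap.comp_apply, fusionMap_tmul τ _ ℛ, map_sum]
  simp only [fusionMap_tmul τ _ (Coalgebra.Repr.arbitrary k _)]
  rw [h]
  refine Finset.sum_congr rfl fun i _ => ?_
  simp [← (Coalgebra.Repr.arbitrary k (ℛ.right i)).eq, map_sum, tmul_sum]

lemma fusionMap_algebraMap_counit :
    fusionMap τ (Algebra.linearMap k A ∘ₗ Coalgebra.counit) = LinearMap.id := by
  refine TensorProduct.ext' fun b w => ?_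
  let ℛ := Coalgebra.Repr.arbitrary k b
  have := congr((LinearMap.toSpanSingleton k W w).lTensor A $(Coalgebra.sum_tmul_counit_eq ℛ))
  simp only [map_sum, LinearMap.lTensor_tmul, LinearMap.toSpanSingleton_apply, one_smul] at this
  simpa [fusionMap_tmul τ _ ℛ, Module.algebraMap_end_apply, smul_tmul] using this

noncomputable def fusionEquiv : A ⊗[k] W ≃ₗ[k] A ⊗[k] W :=
  .ofLinearMap (fusionMap τ .id) (fusionMap τ (HopfAlgebra.antipode k))
    (by rw [fusionMap_comp]
        exact (congrArg _ HopfAlgebra.mul_antipode_lTensor_comul).trans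
          (fusionMap_algebraMap_counit τ))
    (by rw [fusionMap_comp]
        exact (congrArg _ HopfAlgebra.mul_antipode_rTensor_comul).trans
          (fusionMap_algebraMap_counit τ))

variable (V) in
noncomputable def untwist : A ⊗[k] (V ⊗[k] W) ≃ₗ[k] (A ⊗[k] V) ⊗[k] W :=
  (leftComm k A V W).trans <| ((fusionEquiv τ).lTensor V).trans <|
    (leftComm k A V W).symm.trans (TensorProduct.assoc k A V W).symm

lemma untwist_tmul (b : A) (v : V) (w : W) :
    untwist V τ (b ⊗ₜ (v ⊗ₜ w)) =
      tensorAction (Algebra.lsmul k k (A ⊗[k] V)) τ b ((1 ⊗ₜ v) ⊗ₜ w) := by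
  let ℛ := Coalgebra.Repr.arbitrary k b
  simp [untwist, fusionEquiv, fusionMap_tmul τ _ ℛ, tensorAction_tmul _ τ ℛ, map_sum, tmul_sum,
    smul_tmul']

lemma intertwines_untwist :
    Intertwines (Algebra.lsmul k k (A ⊗[k] (V ⊗[k] W)))
      (tensorAction (Algebra.lsmul k k (A ⊗[k] V)) τ) (untwist V τ).toLinearMap := by
  intro a q
  induction q using TensorProduct.induction_on with
  | zero => simp
  | tmul b z =>
    induction z using TensorProduct.induction_on with
    | zero => simp
    | tmul v w => simp [smul_tmul', untwist_tmul, map_mul]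
    | add z z' hz hz' => simp only [tmul_add, map_add, hz, hz']
  | add q q' hq hq' => simp only [map_add, hq, hq']

lemma projective_baseChange_tensor [Module.Free k V] [Module.Free k W] :
    letI := Module.compHom ((A ⊗[k] V) ⊗[k] W)
      (tensorAction (Algebra.lsmul k k (A ⊗[k] V)) τ).toRingHom
    Module.Projective A ((A ⊗[k] V) ⊗[k] W) :=
  projective_of_retract _ (untwist V τ).symm.toLinearMap (untwist V τ).toLinearMap
    (intertwines_untwist τ).symm (intertwines_untwist τ) (untwist V τ).apply_symm_apply

end Untwisting

lemma projective_tensorAction {k A P W : Type*} [CommSemiring k] [Semiring A] [HopfAlgebra k A]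
    [AddCommMonoid P] [Module k P] [Module.Free k P] [AddCommMonoid W] [Module k W]
    [Module.Free k W]
    (ρ : A →ₐ[k] Module.End k P) (τ : A →ₐ[k] Module.End k W)
    (hP : letI := Module.compHom P ρ.toRingHom; Module.Projective A P) :
    letI := Module.compHom (P ⊗[k] W) (tensorAction ρ τ).toRingHom
    Module.Projective A (P ⊗[k] W) := by
  let _ : Module A P := Module.compHom P ρ.toRingHom
  have : IsScalarTower k A P := ⟨fun c a x => LinearMap.congr_fun (map_smul ρ c a) x⟩
  let act : A ⊗[k] P →ₗ[A] P :=
    { toFun := lift ρ.toLinearMap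
      map_add' := map_add _
      map_smul' := fun a q => by
        induction q using TensorProduct.induction_on with
        | zero => simp
        | tmul b x => simp [smul_tmul', map_mul]; rfl
        | add q q' hq hq' => simp_all [smul_add] }
  obtain ⟨s, hs⟩ := Module.projective_lifting_property act .id fun x => ⟨1 ⊗ₜ x, by simp [act]⟩
  have hsk : act.restrictScalars k ∘ₗ s.restrictScalars k = .id :=
    LinearMap.ext fun x => LinearMap.congr_fun hs x
  let _ : Module A ((A ⊗[k] P) ⊗[k] W) := Module.compHom _
    (tensorAction (Algebra.lsmul k k (A ⊗[k] P)) τ).toRingHom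
  have := projective_baseChange_tensor (V := P) τ
  exact projective_of_retract _ (map (s.restrictScalars k) .id) (map (act.restrictScalars k) .id)
    (Intertwines.tensorMap (fun a x => s.map_smul a x) fun _ _ => rfl)
    (Intertwines.tensorMap (fun a q => act.map_smul a q) fun _ _ => rfl)
    fun z => by rw [← LinearMap.comp_apply, ← map_comp, hsk, LinearMap.id_comp, map_id]; rfl

/-- let `A` be a finite dimensional Hopf algebra over a field
`k` and `M` a finite dimensional `A`-module (the `A`-action encoded by the
`k`-algebra map `ρ : A → End_k M`; the dual module `M* = Hom_k(M,k)` carries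
the `A`-action `(a • f)(m) = f(S(a) m)` given by the antipode `S`, encoded by
`ρD`).  If `M ⊗ M` is projective and `M ⊗ M* ≅ M* ⊗ M` as `A`-modules, then
`M` is projective. -/
theorem stmt_19 (k A M : Type*) [Field k] [Ring A] [HopfAlgebra k A]
    [FiniteDimensional k A]
    [AddCommGroup M] [Module k M] [FiniteDimensional k M]
    (ρ : A →ₐ[k] Module.End k M)
    (ρD : A →ₐ[k] Module.End k (Module.Dual k M))
    (hρD : ∀ (a : A) (f : Module.Dual k M) (m : M),
      ρD a f m = f (ρ (HopfAlgebra.antipode (R := k) a) m))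
    (e : (M ⊗[k] Module.Dual k M) ≃ₗ[k] (Module.Dual k M ⊗[k] M))
    (he : ∀ (a : A) (x : M ⊗[k] Module.Dual k M),
      e (tensorAction ρ ρD a x) = tensorAction ρD ρ a (e x))
    (hproj : letI : Module A (M ⊗[k] M) :=
        Module.compHom (M ⊗[k] M) (tensorAction ρ ρ).toRingHom
      Module.Projective A (M ⊗[k] M)) :
    letI : Module A M := Module.compHom M ρ.toRingHom
    Module.Projective A M := by
  let _ : Module A ((M ⊗[k] M) ⊗[k] Module.Dual k M) :=
    Module.compHom _ (tensorAction (tensorAction ρ ρ) ρD).toRingHom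
  have := projective_tensorAction (tensorAction ρ ρ) ρD hproj
  let reorder : M ⊗[k] (Module.Dual k M ⊗[k] M) ≃ₗ[k] (M ⊗[k] M) ⊗[k] Module.Dual k M :=
    (e.symm.lTensor M).trans (TensorProduct.assoc k M M _).symm
  have hreorder : Intertwines (tensorAction ρ (tensorAction ρD ρ))
      (tensorAction (tensorAction ρ ρ) ρD) reorder.toLinearMap :=
    intertwines_assoc.symm.comp (Intertwines.tensorMap (fun _ _ => rfl) (Intertwines.symm he))
  let coev : M →ₗ[k] M ⊗[k] (Module.Dual k M ⊗[k] M) :=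
    (TensorProduct.assoc k M _ M).toLinearMap ∘ₗ TensorProduct.mk k _ M (coevaluation k M 1)
  let ev : M ⊗[k] (Module.Dual k M ⊗[k] M) →ₗ[k] M :=
    (TensorProduct.rid k M).toLinearMap ∘ₗ (contractLeft k M).lTensor M
  have snake (m : M) : ev (coev m) = m := by
    have h := LinearMap.congr_fun (contractLeft_assoc_coevaluation' k M) (1 ⊗ₜ m)
    simpa [ev, coev] using congr(TensorProduct.rid k M $h)
  refine projective_of_retract ρ (reorder.toLinearMap ∘ₗ coev) (ev ∘ₗ reorder.symm.toLinearMap)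
    (hreorder.comp (intertwines_assoc.comp
      (intertwines_mk_of_invariant (tensorAction_coevaluation hρD))))
    ((intertwines_rid_lTensor_of_invariant (contractLeft_tensorAction hρD)).comp hreorder.symm)
    fun m => ?_
  simpa using snake m
end
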